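/- Let $k \ge 2$ and $l \ge 2$ be integers and let $G_l = K_{l-1} \vee (l K_k)$. Then $I'(G_l) = k + \frac{k-1}{l-1}$. -/

import Mathlib

/-! If `G_l - S` has two isolated vertices, each vertex of `K_{l-1}` is adjacent to one of them
and so lies in `S`. The isolated vertices therefore lie in distinct copies of `K_k`, and each of
them forces the other `k - 1` vertices of its copy into `S`. Hence `|S| ≥ (l - 1) + i (k - 1)` for
`i = i(G_l - S) ≤ l`, and the resulting lower bound on `|S| / (i - 1)` is smallest at `i = l`,
where it is attained by deleting all but one vertex of every copy of `K_k`. -/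

open SimpleGraph

noncomputable def isoCount {V : Type*} (G : SimpleGraph V) (S : Set V) : ℕ :=
  {v | v ∉ S ∧ ∀ w, G.Adj v w → w ∈ S}.ncard

noncomputable def isoTough {V : Type*} [Fintype V] (G : SimpleGraph V) : ℝ :=
  sInf {x : ℝ | ∃ S : Set V, 2 ≤ isoCount G S ∧ x = (S.ncard : ℝ) / (isoCount G S : ℝ)}

noncomputable def isoToughVar {V : Type*} [Fintype V] (G : SimpleGraph V) : ℝ :=
  sInf {x : ℝ | ∃ S : Set V, 2 ≤ isoCount G S ∧ x = (S.ncard : ℝ) / ((isoCount G S : ℝ) - 1)}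

/-- The join `K_c ∨ (d K_1)`. -/
def joinKE (c d : ℕ) : SimpleGraph (Fin c ⊕ Fin d) where
  Adj x y := x ≠ y ∧ (x.isLeft ∨ y.isLeft)
  symm := by constructor; intro x y h; tauto
  loopless := by constructor; intro x h; exact h.1 rfl

/-- The star `K_{1,n-1}`: join of one center with `n-1` leaves. -/
def starGraph (n : ℕ) : SimpleGraph (Fin 1 ⊕ Fin (n-1)) := joinKE 1 (n-1)

/-- The graph `G_l = K_{l-1} ∨ (l K_k)`. -/
def Gl (k l : ℕ) : SimpleGraph (Fin (l-1) ⊕ Fin l × Fin k) where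
  Adj x y := x ≠ y ∧ (x.isLeft ∨ y.isLeft ∨
    ∃ i p q, x = Sum.inr (i, p) ∧ y = Sum.inr (i, q))
  symm := by
    constructor
    rintro x y ⟨h1, h2⟩
    refine ⟨h1.symm, ?_⟩
    rcases h2 with h | h | ⟨i, p, q, hx, hy⟩
    · tauto
    · tauto
    · exact Or.inr (Or.inr ⟨i, q, p, hy, hx⟩)
  loopless := ⟨fun x h => h.1 rfl⟩

noncomputable instance GlDec (k l : ℕ) : DecidableRel (Gl k l).Adj := Classical.decRel _

namespace SimpleGraph

variable {V : Type*} (G : SimpleGraph V)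

def isoSet (S : Set V) : Set V := {v | v ∉ S ∧ ∀ w, G.Adj v w → w ∈ S}

lemma isoCount_eq_ncard_isoSet (S : Set V) : isoCount G S = (G.isoSet S).ncard := rfl

variable {G}

lemma disjoint_isoSet (S : Set V) : Disjoint S (G.isoSet S) :=
  Set.disjoint_left.2 fun _ hv hv' => hv'.1 hv

lemma not_adj_of_mem_isoSet {S : Set V} {v w : V} (hv : v ∈ G.isoSet S)
    (hw : w ∈ G.isoSet S) : ¬G.Adj v w :=
  fun hvw => hw.1 (hv.2 w hvw)

lemma mem_of_forall_adj_of_two_le_isoCount {S : Set V} {u : V} (hu : ∀ v, v ≠ u → G.Adj u v)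
    (h : 2 ≤ isoCount G S) : u ∈ S := by
  obtain ⟨w, hw, hwu⟩ := Set.exists_ne_of_one_lt_ncard h u
  exact hw.2 u (hu w hwu).symm

lemma isoSet_compl_of_isIndepSet {T : Set V} (hT : G.IsIndepSet T) : G.isoSet Tᶜ = T := by
  ext v
  refine ⟨fun hv => not_not.1 hv.1, fun hv => ⟨not_not.2 hv, fun w hvw hw => ?_⟩⟩
  exact hT hv hw (G.ne_of_adj hvw) hvw

end SimpleGraph

section Gl

variable {k l : ℕ}

lemma Gl_adj_inl (a : Fin (l - 1)) {v : Fin (l - 1) ⊕ Fin l × Fin k} (hv : v ≠ .inl a) :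
    (Gl k l).Adj (.inl a) v :=
  ⟨hv.symm, .inl rfl⟩

lemma Gl_adj_inr_inr {i j : Fin l} {p q : Fin k} :
    (Gl k l).Adj (.inr (i, p)) (.inr (j, q)) ↔ i = j ∧ p ≠ q := by
  grind [Gl]

variable {S : Set (Fin (l - 1) ⊕ Fin l × Fin k)}

lemma range_inl_subset_of_two_le_isoCount (h : 2 ≤ isoCount (Gl k l) S) :
    Set.range Sum.inl ⊆ S := by
  rintro _ ⟨a, rfl⟩
  exact mem_of_forall_adj_of_two_le_isoCount (fun _ hv => Gl_adj_inl a hv) h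

lemma Gl_isoSet_subset_range_inr (h : 2 ≤ isoCount (Gl k l) S) :
    (Gl k l).isoSet S ⊆ Set.range Sum.inr := by
  rintro (a | x) hv
  · exact absurd (range_inl_subset_of_two_le_isoCount h ⟨a, rfl⟩) hv.1
  · exact ⟨x, rfl⟩

lemma injOn_fst_preimage_inr_Gl_isoSet :
    Set.InjOn Prod.fst (Sum.inr ⁻¹' (Gl k l).isoSet S) := by
  rintro ⟨i, p⟩ hv ⟨j, q⟩ hw (rfl : i = j)
  by_contra hne
  exact not_adj_of_mem_isoSet hv hw (Gl_adj_inr_inr.2 ⟨rfl, fun hpq => hne (by rw [hpq])⟩)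

lemma isoCount_Gl_eq (h : 2 ≤ isoCount (Gl k l) S) :
    isoCount (Gl k l) S = (Sum.inr ⁻¹' (Gl k l).isoSet S).ncard :=
  (Set.ncard_preimage_of_injective_subset_range Sum.inr_injective
    (Gl_isoSet_subset_range_inr h)).symm

lemma isoCount_Gl_le (h : 2 ≤ isoCount (Gl k l) S) : isoCount (Gl k l) S ≤ l := by
  rw [isoCount_Gl_eq h]
  simpa using Set.ncard_le_ncard_of_injOn (t := Set.univ) Prod.fst (fun _ _ => trivial)
    injOn_fst_preimage_inr_Gl_isoSet

lemma le_ncard_add_isoCount_Gl (h : 2 ≤ isoCount (Gl k l) S) :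
    l - 1 + isoCount (Gl k l) S * k ≤ S.ncard + isoCount (Gl k l) S := by
  set J := Sum.inr ⁻¹' (Gl k l).isoSet S
  have hcover : Set.range Sum.inl ∪ Sum.inr '' ((Prod.fst '' J) ×ˢ Set.univ) ⊆
      S ∪ (Gl k l).isoSet S := by
    rintro _ (hv | ⟨⟨i, q⟩, ⟨⟨⟨i, p⟩, hp, rfl⟩, -⟩, rfl⟩)
    · exact .inl (range_inl_subset_of_two_le_isoCount h hv)
    · by_cases hpq : p = q
      · exact .inr (hpq ▸ hp)
      · exact .inl (hp.2 _ (Gl_adj_inr_inr.2 ⟨rfl, hpq⟩))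
  have hdisj : Disjoint (Set.range Sum.inl)
      (Sum.inr '' ((Prod.fst '' J) ×ˢ Set.univ) : Set (Fin (l - 1) ⊕ Fin l × Fin k)) :=
    Set.disjoint_left.2 fun _ ⟨_, ha⟩ ⟨_, _, hb⟩ => Sum.inl_ne_inr (ha.trans hb.symm)
  have := Set.ncard_le_ncard hcover
  rw [Set.ncard_union_eq hdisj, Set.ncard_union_eq (disjoint_isoSet S), Set.ncard_range_of_injective
    Sum.inl_injective, Set.ncard_image_of_injective _ Sum.inr_injective, Set.ncard_prod,
    injOn_fst_preimage_inr_Gl_isoSet.ncard_image, ← isoCount_Gl_eq h] at this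
  simpa [← isoCount_eq_ncard_isoSet] using this

def Gl_transversal (k l : ℕ) (z : Fin k) : Set (Fin (l - 1) ⊕ Fin l × Fin k) :=
  Set.range fun i => .inr (i, z)

lemma Gl_isIndepSet_transversal (z : Fin k) : (Gl k l).IsIndepSet (Gl_transversal k l z) := by
  rintro _ ⟨i, rfl⟩ _ ⟨j, rfl⟩ - hadj
  exact (Gl_adj_inr_inr.1 hadj).2 rfl

lemma ncard_Gl_transversal (z : Fin k) : (Gl_transversal k l z).ncard = l := by
  rw [Gl_transversal, Set.ncard_range_of_injective fun i j h => by simpa using h, Nat.card_fin]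

lemma isoCount_Gl_compl_transversal (z : Fin k) :
    isoCount (Gl k l) (Gl_transversal k l z)ᶜ = l := by
  rw [isoCount_eq_ncard_isoSet, isoSet_compl_of_isIndepSet (Gl_isIndepSet_transversal z),
    ncard_Gl_transversal]

lemma ncard_compl_Gl_transversal_add (z : Fin k) :
    (Gl_transversal k l z)ᶜ.ncard + l = l - 1 + l * k := by
  simpa [ncard_Gl_transversal, add_comm] using
    Set.ncard_add_ncard_compl (Gl_transversal k l z)

end Gl

lemma add_div_le_div_sub_one {k l n s : ℝ} (hk : 1 ≤ k) (hn : 1 < n) (hnl : n ≤ l)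
    (hs : l - 1 + n * k ≤ s + n) : k + (k - 1) / (l - 1) ≤ s / (n - 1) := by
  -- `s / (n - 1) ≥ (k - 1) + (l + k - 2) / (n - 1)`, which decreases in `n`.
  rw [add_div' _ _ _ (by linarith), div_le_div_iff₀ (by linarith) (by linarith)]
  nlinarith [mul_le_mul_of_nonneg_left hnl (by linarith : (0 : ℝ) ≤ l + k - 2)]

theorem Gl_isoToughVar (k l : ℕ) (hk : 2 ≤ k) (hl : 2 ≤ l) :
    isoToughVar (Gl k l) = (k : ℝ) + ((k : ℝ) - 1) / ((l : ℝ) - 1) := by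
  have hl1 : (1 : ℝ) < l := by exact_mod_cast hl
  refine IsLeast.csInf_eq ⟨?_, ?_⟩
  · set S := (Gl_transversal k l ⟨0, by omega⟩)ᶜ
    have hcard : ((S.ncard + l : ℕ) : ℝ) = ((l - 1 + l * k : ℕ) : ℝ) :=
      congrArg Nat.cast (ncard_compl_Gl_transversal_add _)
    push_cast [Nat.cast_sub (by omega : 1 ≤ l)] at hcard
    refine ⟨S, (isoCount_Gl_compl_transversal _).symm ▸ hl, ?_⟩
    rw [isoCount_Gl_compl_transversal, eq_div_iff (by linarith), add_mul, div_mul_cancel₀ _ (by linarith)]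
    linarith
  · rintro _ ⟨S, h, rfl⟩
    have hS : ((l - 1 + isoCount (Gl k l) S * k : ℕ) : ℝ) ≤ S.ncard + isoCount (Gl k l) S := by
      exact_mod_cast le_ncard_add_isoCount_Gl h
    push_cast [Nat.cast_sub (by omega : 1 ≤ l)] at hS
    exact add_div_le_div_sub_one (by exact_mod_cast (by omega : 1 ≤ k)) (by exact_mod_cast h)
      (by exact_mod_cast isoCount_Gl_le h) hS
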